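/- Consistency of the Grenander estimator in weighted integrated square distance: Let X₁, X₂, … be an infinite i.i.d. sequence with values in [0,1] whose common law has a right-continuous nonincreasing density f on [0,1], and for each n let f̂ₙ(x−) be the Grenander estimator built from X₁, …, Xₙ (the left derivative of the least concave majorant of the empirical distribution function Fₙ). Then, with probability one, ∫₀¹ (f̂ₙ(x−) − f(x))²·x dx → 0 as n → ∞. -/

import Mathlib

/-!
Almost surely `Fₙ → F` uniformly on `[0,1]` (Glivenko–Cantelli: the strong law at rational points,
then Pólya's monotonicity argument), hence so do the least concave majorants `F̂ₙ` (Marshall's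
lemma). Left derivatives of concave functions converge wherever the limit is differentiable, which
for `F` happens at every continuity point of the antitone `f`, i.e. almost everywhere. On `(θ,1)`
the `f̂ₙ(x−)` are uniformly bounded, so dominated convergence applies. On `(0,θ]` the weight `x`
does the work: `x·f̂ₙ(x−) ≤ F̂ₙ(x) − F̂ₙ(0)` and `x·f(x) ≤ F(x)` are both `O(F(θ))`, and so are
`∫₀^θ f̂ₙ(x−) dx` and `∫₀^θ f`, which bounds that part of the integral by `O(F(θ)²)`.
-/

open MeasureTheory Set Filter

/-- The empirical distribution function of the first `n` observations of the sequence `X`: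
`Fₙ(x) = n⁻¹ · #{i < n : Xᵢ ≤ x}`. -/
noncomputable def empiricalCDF {Ω : Type*} (X : ℕ → Ω → ℝ) (n : ℕ) (ω : Ω) (x : ℝ) : ℝ :=
  (n : ℝ)⁻¹ * ((Finset.range n).filter fun i => X i ω ≤ x).card

/-- The least concave majorant of `h` on `[0,1]`: the pointwise infimum of all functions that
are concave on `[0,1]` and dominate `h` there. -/
noncomputable def leastConcaveMajorant (h : ℝ → ℝ) (x : ℝ) : ℝ :=
  sInf { y : ℝ | ∃ c : ℝ → ℝ, ConcaveOn ℝ (Icc 0 1) c ∧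
    (∀ z ∈ Icc (0:ℝ) 1, h z ≤ c z) ∧ y = c x }

/-- The Grenander estimator `f̂ₙ(x−)` built from the first `n` observations: the left derivative
of the least concave majorant of the empirical distribution function. -/
noncomputable def grenanderEstimator {Ω : Type*} (X : ℕ → Ω → ℝ) (n : ℕ) (ω : Ω) (x : ℝ) : ℝ :=
  derivWithin (leastConcaveMajorant (empiricalCDF X n ω)) (Iio x) x

open scoped ENNReal Topology

def IsConcaveMajorant (h c : ℝ → ℝ) : Prop :=
  ConcaveOn ℝ (Icc 0 1) c ∧ ∀ z ∈ Icc (0:ℝ) 1, h z ≤ c z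

section LeastConcaveMajorant

variable {h c : ℝ → ℝ} {x y : ℝ}

lemma leastConcaveMajorant_le (hc : IsConcaveMajorant h c) (hx : x ∈ Icc (0:ℝ) 1) :
    leastConcaveMajorant h x ≤ c x :=
  csInf_le ⟨h x, by rintro _ ⟨c', -, hc', rfl⟩; exact hc' x hx⟩ ⟨c, hc.1, hc.2, rfl⟩

lemma le_leastConcaveMajorant_of_forall (hne : ∃ c, IsConcaveMajorant h c)
    (hy : ∀ c, IsConcaveMajorant h c → y ≤ c x) : y ≤ leastConcaveMajorant h x := by
  obtain ⟨c, hc⟩ := hne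
  refine le_csInf ⟨c x, c, hc.1, hc.2, rfl⟩ ?_
  rintro _ ⟨c', hc'c, hc'h, rfl⟩
  exact hy c' ⟨hc'c, hc'h⟩

lemma le_leastConcaveMajorant (hc : IsConcaveMajorant h c) (hx : x ∈ Icc (0:ℝ) 1) :
    h x ≤ leastConcaveMajorant h x :=
  le_leastConcaveMajorant_of_forall ⟨c, hc⟩ fun _ hc' => hc'.2 x hx

lemma concaveOn_leastConcaveMajorant (hne : ∃ c, IsConcaveMajorant h c) :
    ConcaveOn ℝ (Icc 0 1) (leastConcaveMajorant h) := by
  refine ⟨convex_Icc 0 1, fun x hx y hy a b ha hb hab => ?_⟩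
  refine le_leastConcaveMajorant_of_forall hne fun c hc => ?_
  calc a • leastConcaveMajorant h x + b • leastConcaveMajorant h y
      ≤ a • c x + b • c y := by
        gcongr
        exacts [leastConcaveMajorant_le hc hx, leastConcaveMajorant_le hc hy]
    _ ≤ c (a • x + b • y) := hc.1.2 hx hy ha hb hab

/-- A concave majorant `c` with `c y < c x` for some `x < y` is nonincreasing after `y`, so
`min c (c y)` is again a concave majorant of the monotone `h`. -/
lemma monotoneOn_leastConcaveMajorant (hh : MonotoneOn h (Icc 0 1))
    (hne : ∃ c, IsConcaveMajorant h c) : MonotoneOn (leastConcaveMajorant h) (Icc 0 1) := by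
  intro x hx y hy hxy
  rcases hxy.eq_or_lt with rfl | hxy
  · exact le_rfl
  refine le_leastConcaveMajorant_of_forall hne fun c hc => ?_
  rcases le_or_gt (c x) (c y) with hcxy | hcyx
  · exact (leastConcaveMajorant_le hc hx).trans hcxy
  have hc_after : ∀ z ∈ Icc (0:ℝ) 1, y < z → c z ≤ c y := by
    intro z hz hyz
    have hneg : (c y - c x) / (y - x) < 0 := div_neg_of_neg_of_pos (by linarith) (by linarith)
    have := (div_lt_iff₀ (sub_pos.2 hyz)).1 ((hc.1.slope_anti_adjacent hx hz hxy hyz).trans_lt hneg)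
    linarith
  have htrunc : IsConcaveMajorant h (c ⊓ fun _ => c y) := by
    refine ⟨hc.1.inf (concaveOn_const _ (convex_Icc 0 1)), fun z hz => le_inf (hc.2 z hz) ?_⟩
    rcases le_or_gt z y with hzy | hyz
    · exact (hh hz hy hzy).trans (hc.2 y hy)
    · exact (hc.2 z hz).trans (hc_after z hz hyz)
  exact (leastConcaveMajorant_le htrunc hx).trans inf_le_right

lemma abs_leastConcaveMajorant_sub_le {G : ℝ → ℝ} {ε : ℝ} (hG : ConcaveOn ℝ (Icc 0 1) G)
    (hhG : ∀ z ∈ Icc (0:ℝ) 1, |h z - G z| ≤ ε) (hx : x ∈ Icc (0:ℝ) 1) :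
    |leastConcaveMajorant h x - G x| ≤ ε := by
  have hmaj : IsConcaveMajorant h (fun z => G z + ε) :=
    ⟨hG.add_const ε, fun z hz => by linarith [(abs_le.1 (hhG z hz)).2]⟩
  have hup := leastConcaveMajorant_le hmaj hx
  have hlow := le_leastConcaveMajorant hmaj hx
  have := abs_le.1 (hhG x hx)
  rw [abs_le]
  constructor <;> linarith

lemma TendstoUniformlyOn.leastConcaveMajorant {ι : Type*} {l : Filter ι} {h : ι → ℝ → ℝ}
    {G : ℝ → ℝ} (hG : ConcaveOn ℝ (Icc 0 1) G) (hhG : TendstoUniformlyOn h G l (Icc 0 1)) :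
    TendstoUniformlyOn (fun n => leastConcaveMajorant (h n)) G l (Icc 0 1) := by
  rw [Metric.tendstoUniformlyOn_iff] at hhG ⊢
  intro ε hε
  filter_upwards [hhG (ε / 2) (half_pos hε)] with n hn x hx
  rw [dist_comm, Real.dist_eq]
  refine (abs_leastConcaveMajorant_sub_le hG (fun z hz => ?_) hx).trans_lt (half_lt_self hε)
  rw [← Real.dist_eq, dist_comm]
  exact (hn z hz).le

end LeastConcaveMajorant

section LeftDeriv

variable {S : Set ℝ} {g : ℝ → ℝ} {x y : ℝ}

lemma ConcaveOn.leftDeriv_le_slope_of_mem_interior (hg : ConcaveOn ℝ S g) (hx : x ∈ S)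
    (hy : y ∈ interior S) (hxy : x < y) : derivWithin g (Iio y) y ≤ slope g x y := by
  have := hg.neg.slope_le_leftDeriv_of_mem_interior hx hy hxy
  simpa only [slope_neg_fun, derivWithin.neg, Pi.neg_apply, neg_le_neg_iff] using this

lemma ConcaveOn.slope_le_leftDeriv_of_mem_interior (hg : ConcaveOn ℝ S g)
    (hx : x ∈ interior S) (hy : y ∈ S) (hxy : x < y) : slope g x y ≤ derivWithin g (Iio x) x := by
  have := (hg.neg.leftDeriv_le_rightDeriv_of_mem_interior hx).trans
    (hg.neg.rightDeriv_le_slope_of_mem_interior hx hy hxy)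
  simpa only [slope_neg_fun, derivWithin.neg, Pi.neg_apply, neg_le_neg_iff] using this

lemma ConcaveOn.antitoneOn_leftDeriv (hg : ConcaveOn ℝ S g) :
    AntitoneOn (fun x => derivWithin g (Iio x) x) (interior S) := by
  intro x hx y hy hxy
  have := hg.neg.monotoneOn_leftDeriv hx hy hxy
  simpa only [derivWithin.neg, neg_le_neg_iff] using this

lemma ConcaveOn.leftDeriv_mul_sub_le (hg : ConcaveOn ℝ S g) (hx : x ∈ S) (hy : y ∈ interior S)
    (hxy : x < y) : derivWithin g (Iio y) y * (y - x) ≤ g y - g x := by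
  have := hg.leftDeriv_le_slope_of_mem_interior hx hy hxy
  rwa [slope_def_field, le_div_iff₀ (sub_pos.2 hxy)] at this

lemma MonotoneOn.leftDeriv_nonneg (hg : MonotoneOn g S) (hx : x ∈ interior S) :
    0 ≤ derivWithin g (Iio x) x := by
  rw [← derivWithin_inter (mem_interior_iff_mem_nhds.1 hx)]
  exact (hg.mono inter_subset_right).derivWithin_nonneg

/-- The left derivatives are squeezed between secant slopes on both sides of `x`. -/
lemma ConcaveOn.tendsto_leftDeriv {ι : Type*} {l : Filter ι} {g : ι → ℝ → ℝ} {G : ℝ → ℝ}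
    {d : ℝ} (hg : ∀ n, ConcaveOn ℝ S (g n)) (hx : x ∈ interior S)
    (hgG : ∀ z ∈ S, Tendsto (fun n => g n z) l (𝓝 (G z))) (hG : HasDerivAt G d x) :
    Tendsto (fun n => derivWithin (g n) (Iio x) x) l (𝓝 d) := by
  have hxS : x ∈ S := interior_subset hx
  have hslope := hasDerivAt_iff_tendsto_slope.1 hG
  have hS : S ∈ 𝓝 x := mem_interior_iff_mem_nhds.1 hx
  have hconv : ∀ z ∈ S, Tendsto (fun n => slope (g n) x z) l (𝓝 (slope G x z)) := fun z hz => by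
    simpa only [slope_def_field] using ((hgG z hz).sub (hgG x hxS)).div_const (z - x)
  have hright : ∀ᶠ z in 𝓝[>] x, z ∈ S ∧ x < z :=
    Eventually.and (nhdsWithin_le_nhds hS) self_mem_nhdsWithin
  have hleft : ∀ᶠ z in 𝓝[<] x, z ∈ S ∧ z < x :=
    Eventually.and (nhdsWithin_le_nhds hS) self_mem_nhdsWithin
  refine tendsto_order.2 ⟨fun a ha => ?_, fun b hb => ?_⟩
  · obtain ⟨z, hza, hzS, hxz⟩ := (((hslope.mono_left (nhdsGT_le_nhdsNE x)).eventually
      (lt_mem_nhds ha)).and hright).exists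
    filter_upwards [(hconv z hzS).eventually (lt_mem_nhds hza)] with n hn
    exact hn.trans_le ((hg n).slope_le_leftDeriv_of_mem_interior hx hzS hxz)
  · obtain ⟨z, hzb, hzS, hzx⟩ := (((hslope.mono_left (nhdsLT_le_nhdsNE x)).eventually
      (gt_mem_nhds hb)).and hleft).exists
    filter_upwards [(hconv z hzS).eventually (gt_mem_nhds hzb)] with n hn
    rw [slope_comm] at hn
    exact ((hg n).leftDeriv_le_slope_of_mem_interior hzS hx hzx).trans_lt hn

/-- By Lebesgue's differentiation theorem the left derivative is the derivative almost
everywhere. -/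
lemma MonotoneOn.lintegral_leftDeriv_le {a b : ℝ} (hg : MonotoneOn g (Icc a b)) (hab : a ≤ b) :
    ∫⁻ x in Ioc a b, ENNReal.ofReal (derivWithin g (Iio x) x) ≤ ENNReal.ofReal (g b - g a) := by
  have hIoo : ∀ᵐ x ∂volume.restrict (Ioc a b), x ∈ Ioo a b := by
    rw [← Measure.restrict_congr_set Ioo_ae_eq_Ioc]
    exact ae_restrict_mem measurableSet_Ioo
  have hdiff : ∀ᵐ x ∂volume.restrict (Ioc a b), x ∈ Ioo a b → DifferentiableAt ℝ g x :=
    ae_restrict_of_ae ((hg.mono Ioo_subset_Icc_self).ae_differentiableWithinAt_of_mem.mono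
      fun x hx hxI => (hx hxI).differentiableAt (Ioo_mem_nhds hxI.1 hxI.2))
  have hderiv_nonneg : ∀ x ∈ Ioo a b, 0 ≤ deriv g x := fun x hx => by
    rw [← derivWithin_of_mem_nhds (Icc_mem_nhds hx.1 hx.2)]
    exact hg.derivWithin_nonneg
  have hint : IntegrableOn (deriv g) (Ioc a b) :=
    (intervalIntegrable_iff_integrableOn_Ioc_of_le hab).1
      (MonotoneOn.intervalIntegrable_deriv (by rwa [uIcc_of_le hab]))
  have hmem : ∫ x in a..b, deriv g x ∈ uIcc 0 (g b - g a) :=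
    MonotoneOn.intervalIntegral_deriv_mem_uIcc (by rwa [uIcc_of_le hab])
  rw [uIcc_of_le (sub_nonneg.2 (hg (left_mem_Icc.2 hab) (right_mem_Icc.2 hab) hab)),
    intervalIntegral.integral_of_le hab] at hmem
  calc ∫⁻ x in Ioc a b, ENNReal.ofReal (derivWithin g (Iio x) x)
      = ∫⁻ x in Ioc a b, ENNReal.ofReal (deriv g x) := by
        refine lintegral_congr_ae ?_
        filter_upwards [hIoo, hdiff] with x hx hxd
        rw [(hxd hx).hasDerivAt.hasDerivWithinAt.derivWithin (uniqueDiffWithinAt_Iio x)]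
    _ = ENNReal.ofReal (∫ x in Ioc a b, deriv g x) := by
        refine (ofReal_integral_eq_lintegral_ofReal hint ?_).symm
        filter_upwards [hIoo] with x hx using hderiv_nonneg x hx
    _ ≤ ENNReal.ofReal (g b - g a) := ENNReal.ofReal_le_ofReal hmem.2

end LeftDeriv

section Antitone

variable {f : ℝ → ℝ} {u v : ℝ}

lemma AntitoneOn.intervalIntegral_le_mul (hf : AntitoneOn f (Ico u v)) (huv : u ≤ v)
    (hint : IntervalIntegrable f volume u v) : ∫ t in u..v, f t ≤ (v - u) * f u := by
  calc ∫ t in u..v, f t ≤ ∫ _ in u..v, f u :=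
        intervalIntegral.integral_mono_on_of_le_Ioo huv hint intervalIntegrable_const
          fun t ht => hf ⟨le_rfl, ht.1.trans ht.2⟩ ⟨ht.1.le, ht.2⟩ ht.1.le
    _ = (v - u) * f u := by rw [intervalIntegral.integral_const, smul_eq_mul]

lemma AntitoneOn.mul_le_intervalIntegral (hf : AntitoneOn f (Ioc u v)) (huv : u ≤ v)
    (hint : IntervalIntegrable f volume u v) : (v - u) * f v ≤ ∫ t in u..v, f t := by
  calc (v - u) * f v = ∫ _ in u..v, f v := by rw [intervalIntegral.integral_const, smul_eq_mul]
    _ ≤ ∫ t in u..v, f t :=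
        intervalIntegral.integral_mono_on_of_le_Ioo huv intervalIntegrable_const hint
          fun t ht => hf ⟨ht.1, ht.2.le⟩ ⟨ht.1.trans ht.2, le_rfl⟩ ht.2.le

lemma AntitoneOn.ae_continuousAt {s : Set ℝ} (hf : AntitoneOn f s) (hs : IsOpen s) :
    ∀ᵐ x, x ∈ s → ContinuousAt f x := by
  filter_upwards [hf.countable_not_continuousWithinAt.ae_notMem volume] with x hx hxs
  by_contra hcont
  exact hx ⟨hxs, fun h => hcont (h.continuousAt (hs.mem_nhds hxs))⟩

end Antitone

noncomputable def cdfOfDensity (f : ℝ → ℝ) (x : ℝ) : ℝ := ∫ y in (0)..x, f y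

section CdfOfDensity

variable {f : ℝ → ℝ} {x : ℝ}

lemma MeasureTheory.IntegrableOn.intervalIntegrable_of_mem_Icc (hint : IntegrableOn f (Ioc 0 1))
    {u v : ℝ} (hu : u ∈ Icc (0:ℝ) 1) (hv : v ∈ Icc (0:ℝ) 1) : IntervalIntegrable f volume u v :=
  intervalIntegrable_iff.2 (hint.mono_set (Ioc_subset_Ioc (le_min hu.1 hv.1) (max_le hu.2 hv.2)))

lemma cdfOfDensity_sub (hint : IntegrableOn f (Ioc 0 1)) {u v : ℝ} (hu : u ∈ Icc (0:ℝ) 1)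
    (hv : v ∈ Icc (0:ℝ) 1) : cdfOfDensity f v - cdfOfDensity f u = ∫ y in u..v, f y :=
  intervalIntegral.integral_interval_sub_left
    (hint.intervalIntegrable_of_mem_Icc (left_mem_Icc.2 zero_le_one) hv)
    (hint.intervalIntegrable_of_mem_Icc (left_mem_Icc.2 zero_le_one) hu)

lemma monotoneOn_cdfOfDensity (hnn : ∀ x ∈ Ioc (0:ℝ) 1, 0 ≤ f x)
    (hint : IntegrableOn f (Ioc 0 1)) : MonotoneOn (cdfOfDensity f) (Icc 0 1) := by
  intro u hu v hv huv
  rw [← sub_nonneg, cdfOfDensity_sub hint hu hv, ← intervalIntegral.integral_zero]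
  exact intervalIntegral.integral_mono_on_of_le_Ioo huv intervalIntegrable_const
    (hint.intervalIntegrable_of_mem_Icc hu hv)
    fun t ht => hnn t ⟨hu.1.trans_lt ht.1, ht.2.le.trans hv.2⟩

lemma cdfOfDensity_nonneg (hnn : ∀ x ∈ Ioc (0:ℝ) 1, 0 ≤ f x)
    (hint : IntegrableOn f (Ioc 0 1)) (hx : x ∈ Icc (0:ℝ) 1) : 0 ≤ cdfOfDensity f x := by
  simpa [cdfOfDensity] using
    monotoneOn_cdfOfDensity hnn hint (left_mem_Icc.2 zero_le_one) hx hx.1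

lemma concaveOn_cdfOfDensity (hanti : AntitoneOn f (Ioc 0 1)) (hint : IntegrableOn f (Ioc 0 1)) :
    ConcaveOn ℝ (Icc 0 1) (cdfOfDensity f) := by
  refine concaveOn_of_slope_anti_adjacent (convex_Icc 0 1) fun {x y z} hx hz hxy hyz => ?_
  have hy : y ∈ Icc (0:ℝ) 1 := ⟨hx.1.trans hxy.le, hyz.le.trans hz.2⟩
  rw [cdfOfDensity_sub hint hy hz, cdfOfDensity_sub hint hx hy,
    div_le_div_iff₀ (sub_pos.2 hyz) (sub_pos.2 hxy)]
  have hupper : ∫ t in y..z, f t ≤ (z - y) * f y :=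
    (hanti.mono fun t ht => ⟨(hx.1.trans_lt hxy).trans_le ht.1, ht.2.le.trans hz.2⟩
      ).intervalIntegral_le_mul hyz.le (hint.intervalIntegrable_of_mem_Icc hy hz)
  have hlower : (y - x) * f y ≤ ∫ t in x..y, f t :=
    (hanti.mono fun t ht => ⟨hx.1.trans_lt ht.1, ht.2.trans hy.2⟩).mul_le_intervalIntegral
      hxy.le (hint.intervalIntegrable_of_mem_Icc hx hy)
  nlinarith [sub_pos.2 hxy, sub_pos.2 hyz]

lemma mul_le_cdfOfDensity (hanti : AntitoneOn f (Ioc 0 1)) (hint : IntegrableOn f (Ioc 0 1))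
    (hx : x ∈ Ioc (0:ℝ) 1) : f x * x ≤ cdfOfDensity f x := by
  have := (hanti.mono (Ioc_subset_Ioc_right hx.2)).mul_le_intervalIntegral hx.1.le
    (hint.intervalIntegrable_of_mem_Icc (left_mem_Icc.2 zero_le_one) (Ioc_subset_Icc_self hx))
  rwa [sub_zero, mul_comm] at this

lemma continuousOn_cdfOfDensity (hint : IntegrableOn f (Ioc 0 1)) :
    ContinuousOn (cdfOfDensity f) (Icc 0 1) := by
  have := intervalIntegral.continuousOn_primitive_interval (a := 0) (b := 1) (f := f)
    (μ := volume)
    (by rwa [uIcc_of_le zero_le_one, integrableOn_Icc_iff_integrableOn_Ioc])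
  rwa [uIcc_of_le zero_le_one] at this

lemma exists_cdfOfDensity_lt (hint : IntegrableOn f (Ioc 0 1)) {c : ℝ} (hc : 0 < c) :
    ∃ θ ∈ Ioo (0:ℝ) 1, cdfOfDensity f θ < c := by
  have hlim : Tendsto (cdfOfDensity f) (𝓝[Ioo 0 1] 0) (𝓝 0) := by
    have := (((continuousOn_cdfOfDensity hint) 0 (left_mem_Icc.2 zero_le_one)).mono
      Ioo_subset_Icc_self).tendsto
    rwa [cdfOfDensity, intervalIntegral.integral_same] at this
  have := left_nhdsWithin_Ioo_neBot (zero_lt_one' ℝ)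
  exact ((hlim.eventually (gt_mem_nhds hc)).and self_mem_nhdsWithin).exists.imp
    fun θ h => ⟨h.2, h.1⟩

lemma hasDerivAt_cdfOfDensity (hint : IntegrableOn f (Ioc 0 1)) (hx : x ∈ Ioo (0:ℝ) 1)
    (hcont : ContinuousAt f x) : HasDerivAt (cdfOfDensity f) (f x) x :=
  intervalIntegral.integral_hasDerivAt_right
    (hint.intervalIntegrable_of_mem_Icc (left_mem_Icc.2 zero_le_one) (Ioo_subset_Icc_self hx))
    ⟨Ioo 0 1, Ioo_mem_nhds hx.1 hx.2, (hint.mono_set Ioo_subset_Ioc_self).aestronglyMeasurable⟩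
    hcont

lemma lintegral_Ioc_ofReal_eq_cdfOfDensity (hnn : ∀ x ∈ Ioc (0:ℝ) 1, 0 ≤ f x)
    (hint : IntegrableOn f (Ioc 0 1)) (hx : x ∈ Icc (0:ℝ) 1) :
    ∫⁻ y in Ioc 0 x, ENNReal.ofReal (f y) = ENNReal.ofReal (cdfOfDensity f x) := by
  rw [cdfOfDensity, intervalIntegral.integral_of_le hx.1]
  refine (ofReal_integral_eq_lintegral_ofReal (hint.mono_set (Ioc_subset_Ioc_right hx.2)) ?_).symm
  filter_upwards [ae_restrict_mem measurableSet_Ioc] with y hy using hnn y ⟨hy.1, hy.2.trans hx.2⟩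

end CdfOfDensity

lemma lintegral_ofReal_sq_sub_mul_le {X : Type*} [MeasurableSpace X] {μ : Measure X}
    {u v w : X → ℝ} {α : ℝ} (hα : 0 ≤ α) (hv : AEMeasurable v μ)
    (hu_bound : ∀ᵐ x ∂μ, 0 ≤ u x ∧ u x * w x ≤ α) (hv_bound : ∀ᵐ x ∂μ, 0 ≤ v x ∧ v x * w x ≤ α) :
    ∫⁻ x, ENNReal.ofReal ((u x - v x) ^ 2 * w x) ∂μ
      ≤ ENNReal.ofReal α * (∫⁻ x, ENNReal.ofReal (u x) ∂μ + ∫⁻ x, ENNReal.ofReal (v x) ∂μ) := by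
  calc ∫⁻ x, ENNReal.ofReal ((u x - v x) ^ 2 * w x) ∂μ
      ≤ ∫⁻ x, ENNReal.ofReal α * ENNReal.ofReal (u x)
          + ENNReal.ofReal α * ENNReal.ofReal (v x) ∂μ := by
        refine lintegral_mono_ae ?_
        filter_upwards [hu_bound, hv_bound] with x ⟨hu0, hu⟩ ⟨hv0, hv⟩
        rw [← ENNReal.ofReal_mul hα, ← ENNReal.ofReal_mul hα,
          ← ENNReal.ofReal_add (mul_nonneg hα hu0) (mul_nonneg hα hv0)]
        refine ENNReal.ofReal_le_ofReal ?_
        rcases le_or_gt 0 (w x) with hw | hw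
        · nlinarith [mul_nonneg hu0 hv0, mul_nonneg (mul_nonneg hu0 hv0) hw]
        · nlinarith [sq_nonneg (u x - v x), mul_nonneg hα hu0, mul_nonneg hα hv0]
    _ = ENNReal.ofReal α * (∫⁻ x, ENNReal.ofReal (u x) ∂μ + ∫⁻ x, ENNReal.ofReal (v x) ∂μ) := by
        rw [lintegral_add_right' _ (hv.ennreal_ofReal.const_mul _), mul_add,
          lintegral_const_mul' _ _ ENNReal.ofReal_ne_top,
          lintegral_const_mul' _ _ ENNReal.ofReal_ne_top]

section Deterministic

variable {f g : ℝ → ℝ}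

lemma lintegral_Ioc_sq_leftDeriv_sub_le (hnn : ∀ x ∈ Ioc (0:ℝ) 1, 0 ≤ f x)
    (hanti : AntitoneOn f (Ioc 0 1)) (hint : IntegrableOn f (Ioc 0 1))
    (hgc : ConcaveOn ℝ (Icc 0 1) g) (hgm : MonotoneOn g (Icc 0 1)) {θ η : ℝ} (hθ : θ ∈ Ioo (0:ℝ) 1)
    (hη : 0 ≤ η) (hgF : ∀ x ∈ Icc (0:ℝ) 1, |g x - cdfOfDensity f x| ≤ η) :
    ∫⁻ x in Ioc 0 θ, ENNReal.ofReal ((derivWithin g (Iio x) x - f x) ^ 2 * x)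
      ≤ ENNReal.ofReal (2 * (cdfOfDensity f θ + 2 * η) ^ 2) := by
  set F := cdfOfDensity f
  set α := F θ + 2 * η
  have hθI : θ ∈ Icc (0:ℝ) 1 := Ioo_subset_Icc_self hθ
  have h0 : (0:ℝ) ∈ Icc (0:ℝ) 1 := left_mem_Icc.2 zero_le_one
  have hF0 : F 0 = 0 := intervalIntegral.integral_same
  have hα : 0 ≤ α := add_nonneg (cdfOfDensity_nonneg hnn hint hθI) (by positivity)
  have hsub : Ioc 0 θ ⊆ Ioo (0:ℝ) 1 := fun x hx => ⟨hx.1, hx.2.trans_lt hθ.2⟩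
  have hg_sub : g θ - g 0 ≤ α := by
    linarith [(abs_le.1 (hgF θ hθI)).2, (abs_le.1 (hgF 0 h0)).1]
  have hD : ∀ᵐ x ∂volume.restrict (Ioc 0 θ),
      0 ≤ derivWithin g (Iio x) x ∧ derivWithin g (Iio x) x * x ≤ α := by
    filter_upwards [ae_restrict_mem measurableSet_Ioc] with x hx
    have hxi : x ∈ interior (Icc (0:ℝ) 1) := by rw [interior_Icc]; exact hsub hx
    have hxI : x ∈ Icc (0:ℝ) 1 := interior_subset hxi
    refine ⟨hgm.leftDeriv_nonneg hxi, ?_⟩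
    have := hgc.leftDeriv_mul_sub_le h0 hxi hx.1
    rw [sub_zero] at this
    linarith [(abs_le.1 (hgF x hxI)).2, (abs_le.1 (hgF 0 h0)).1,
      monotoneOn_cdfOfDensity hnn hint hxI hθI hx.2]
  have hf : ∀ᵐ x ∂volume.restrict (Ioc 0 θ), 0 ≤ f x ∧ f x * x ≤ α := by
    filter_upwards [ae_restrict_mem measurableSet_Ioc] with x hx
    have hxI : x ∈ Ioc (0:ℝ) 1 := Ioo_subset_Ioc_self (hsub hx)
    refine ⟨hnn x hxI, ?_⟩
    linarith [mul_le_cdfOfDensity hanti hint hxI,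
      monotoneOn_cdfOfDensity hnn hint (Ioc_subset_Icc_self hxI) hθI hx.2]
  have hfm : AEMeasurable f (volume.restrict (Ioc 0 θ)) :=
    (hint.mono_set (Ioc_subset_Ioc_right hθ.2.le)).aestronglyMeasurable.aemeasurable
  have hDint : ∫⁻ x in Ioc 0 θ, ENNReal.ofReal (derivWithin g (Iio x) x) ≤ ENNReal.ofReal α :=
    ((hgm.mono (Icc_subset_Icc_right hθ.2.le)).lintegral_leftDeriv_le hθ.1.le).trans
      (ENNReal.ofReal_le_ofReal hg_sub)
  have hfint : ∫⁻ x in Ioc 0 θ, ENNReal.ofReal (f x) ≤ ENNReal.ofReal α := by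
    rw [lintegral_Ioc_ofReal_eq_cdfOfDensity hnn hint hθI]
    exact ENNReal.ofReal_le_ofReal (by linarith)
  calc ∫⁻ x in Ioc 0 θ, ENNReal.ofReal ((derivWithin g (Iio x) x - f x) ^ 2 * x)
      ≤ ENNReal.ofReal α * (ENNReal.ofReal α + ENNReal.ofReal α) :=
        (lintegral_ofReal_sq_sub_mul_le hα hfm hD hf).trans (by gcongr)
    _ = ENNReal.ofReal (2 * α ^ 2) := by
        rw [← ENNReal.ofReal_add hα hα, ← ENNReal.ofReal_mul hα]
        ring_nf

lemma sq_leftDeriv_sub_mul_le (hnn : ∀ x ∈ Ioc (0:ℝ) 1, 0 ≤ f x) (hanti : AntitoneOn f (Ioc 0 1))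
    (hgc : ConcaveOn ℝ (Icc 0 1) g) (hgm : MonotoneOn g (Icc 0 1)) {θ B x : ℝ}
    (hθ : θ ∈ Ioo (0:ℝ) 1) (hgB : g 1 - g 0 ≤ B) (hx : x ∈ Ioo θ 1) :
    (derivWithin g (Iio x) x - f x) ^ 2 * x ≤ (B / θ + f θ) ^ 2 := by
  have hx0 : 0 < x := hθ.1.trans hx.1
  have hxi : x ∈ interior (Icc (0:ℝ) 1) := by rw [interior_Icc]; exact ⟨hx0, hx.2⟩
  have hD0 := hgm.leftDeriv_nonneg hxi
  have hDx := hgc.leftDeriv_mul_sub_le (left_mem_Icc.2 zero_le_one) hxi hx0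
  have hg1 := hgm (interior_subset hxi) (right_mem_Icc.2 zero_le_one) hx.2.le
  have hDθ : derivWithin g (Iio x) x ≤ B / θ := by
    rw [le_div_iff₀ hθ.1]; nlinarith [hx.1]
  have hf0 : 0 ≤ f x := hnn x ⟨hx0, hx.2.le⟩
  have hfθ : f x ≤ f θ := hanti ⟨hθ.1, hθ.2.le⟩ ⟨hx0, hx.2.le⟩ hx.1.le
  have hsq : (derivWithin g (Iio x) x - f x) ^ 2 ≤ (B / θ + f θ) ^ 2 :=
    sq_le_sq' (by linarith) (by linarith)
  nlinarith [sq_nonneg (derivWithin g (Iio x) x - f x), hx.2]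

lemma tendsto_lintegral_Ioo_sq_leftDeriv_sub (hnn : ∀ x ∈ Ioc (0:ℝ) 1, 0 ≤ f x)
    (hanti : AntitoneOn f (Ioc 0 1)) (hint : IntegrableOn f (Ioc 0 1)) {L : ℕ → ℝ → ℝ}
    (hLc : ∀ n, ConcaveOn ℝ (Icc 0 1) (L n)) (hLm : ∀ n, MonotoneOn (L n) (Icc 0 1))
    (hLF : ∀ x ∈ Icc (0:ℝ) 1, Tendsto (fun n => L n x) atTop (𝓝 (cdfOfDensity f x)))
    {θ : ℝ} (hθ : θ ∈ Ioo (0:ℝ) 1) :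
    Tendsto (fun n => ∫⁻ x in Ioo θ 1, ENNReal.ofReal ((derivWithin (L n) (Iio x) x - f x) ^ 2 * x))
      atTop (𝓝 0) := by
  set F := cdfOfDensity f
  have h0 : (0:ℝ) ∈ Icc (0:ℝ) 1 := left_mem_Icc.2 zero_le_one
  have h1 : (1:ℝ) ∈ Icc (0:ℝ) 1 := right_mem_Icc.2 zero_le_one
  have hF0 : F 0 = 0 := intervalIntegral.integral_same
  have hsub : Ioo θ 1 ⊆ Ioo (0:ℝ) 1 := Ioo_subset_Ioo_left hθ.1.le
  have hmeas : ∀ n, AEMeasurable (fun x => ENNReal.ofReal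
      ((derivWithin (L n) (Iio x) x - f x) ^ 2 * x)) (volume.restrict (Ioo θ 1)) := fun n =>
    (((aemeasurable_restrict_of_antitoneOn measurableSet_Ioo
      ((hLc n).antitoneOn_leftDeriv.mono (by rwa [interior_Icc]))).sub
      (hint.mono_set (hsub.trans Ioo_subset_Ioc_self)).aestronglyMeasurable.aemeasurable).pow_const
      2 |>.mul aemeasurable_id).ennreal_ofReal
  have hbound : ∀ᶠ n in atTop, ∀ᵐ x ∂volume.restrict (Ioo θ 1),
      ENNReal.ofReal ((derivWithin (L n) (Iio x) x - f x) ^ 2 * x)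
        ≤ ENNReal.ofReal (((F 1 + 1) / θ + f θ) ^ 2) := by
    filter_upwards [((hLF 1 h1).sub (hLF 0 h0)).eventually
      (gt_mem_nhds (show F 1 - F 0 < F 1 + 1 by linarith))] with n hn
    filter_upwards [ae_restrict_mem measurableSet_Ioo] with x hx
    exact ENNReal.ofReal_le_ofReal (sq_leftDeriv_sub_mul_le hnn hanti (hLc n) (hLm n) hθ hn.le hx)
  have hfin : ∫⁻ _ in Ioo θ 1, ENNReal.ofReal (((F 1 + 1) / θ + f θ) ^ 2) ≠ ⊤ := by
    rw [setLIntegral_const]; exact ENNReal.mul_ne_top ENNReal.ofReal_ne_top measure_Ioo_lt_top.ne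
  have hlim : ∀ᵐ x ∂volume.restrict (Ioo θ 1), Tendsto (fun n => ENNReal.ofReal
      ((derivWithin (L n) (Iio x) x - f x) ^ 2 * x)) atTop (𝓝 0) := by
    filter_upwards [ae_restrict_mem measurableSet_Ioo,
      ae_restrict_of_ae ((hanti.mono Ioo_subset_Ioc_self).ae_continuousAt isOpen_Ioo)]
      with x hx hcont
    have hD := ConcaveOn.tendsto_leftDeriv hLc (by rw [interior_Icc]; exact hsub hx) hLF
      (hasDerivAt_cdfOfDensity hint (hsub hx) (hcont (hsub hx)))
    simpa using ENNReal.tendsto_ofReal (((hD.sub_const (f x)).pow 2).mul_const x)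
  simpa using tendsto_lintegral_filter_of_dominated_convergence' _
    (Eventually.of_forall hmeas) hbound hfin hlim

theorem tendsto_lintegral_sq_leftDeriv_sub (hnn : ∀ x ∈ Ioc (0:ℝ) 1, 0 ≤ f x)
    (hanti : AntitoneOn f (Ioc 0 1)) (hint : IntegrableOn f (Ioc 0 1)) {L : ℕ → ℝ → ℝ}
    (hLc : ∀ n, ConcaveOn ℝ (Icc 0 1) (L n)) (hLm : ∀ n, MonotoneOn (L n) (Icc 0 1))
    (hLF : TendstoUniformlyOn L (cdfOfDensity f) atTop (Icc 0 1)) :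
    Tendsto (fun n => ∫⁻ x in Ioc (0:ℝ) 1,
      ENNReal.ofReal ((derivWithin (L n) (Iio x) x - f x) ^ 2 * x)) atTop (𝓝 0) := by
  rw [ENNReal.tendsto_nhds_zero]
  intro ε hε
  obtain ⟨r, hr0, hr_pos, hrε⟩ := ENNReal.lt_iff_exists_real_btwn.1 (ENNReal.half_pos hε.ne')
  set a := √(r / 2)
  have ha : 0 < a := Real.sqrt_pos.2 (by linarith [ENNReal.ofReal_pos.1 hr_pos])
  have ha_sq : 2 * a ^ 2 = r := by rw [Real.sq_sqrt (by linarith)]; ring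
  obtain ⟨θ, hθ, hFθ⟩ := exists_cdfOfDensity_lt hint (half_pos ha)
  have hFθ0 := cdfOfDensity_nonneg hnn hint (Ioo_subset_Icc_self hθ)
  have hhead : ∀ᶠ n in atTop, ∫⁻ x in Ioc 0 θ,
      ENNReal.ofReal ((derivWithin (L n) (Iio x) x - f x) ^ 2 * x) ≤ ε / 2 := by
    filter_upwards [Metric.tendstoUniformlyOn_iff.1 hLF (a / 4) (by positivity)] with n hn
    refine (lintegral_Ioc_sq_leftDeriv_sub_le (η := a / 4) hnn hanti hint (hLc n) (hLm n) hθ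
      (by positivity) fun x hx => ?_).trans (le_trans ?_ hrε.le)
    · rw [← Real.dist_eq, dist_comm]; exact (hn x hx).le
    · refine ENNReal.ofReal_le_ofReal ?_
      rw [← ha_sq]
      gcongr
      linarith
  have htail := ENNReal.tendsto_nhds_zero.1 (tendsto_lintegral_Ioo_sq_leftDeriv_sub hnn hanti hint
    hLc hLm (fun x hx => hLF.tendsto_at hx) hθ) _ (ENNReal.half_pos hε.ne')
  filter_upwards [hhead, htail] with n hhead_n htail_n
  calc ∫⁻ x in Ioc 0 1, ENNReal.ofReal ((derivWithin (L n) (Iio x) x - f x) ^ 2 * x)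
      = ∫⁻ x in Ioc 0 θ ∪ Ioo θ 1,
          ENNReal.ofReal ((derivWithin (L n) (Iio x) x - f x) ^ 2 * x) := by
        rw [Ioc_union_Ioo_eq_Ioo hθ.1.le hθ.2]
        exact setLIntegral_congr Ioo_ae_eq_Ioc.symm
    _ ≤ ε / 2 + ε / 2 := (lintegral_union_le _ _ _).trans (add_le_add hhead_n htail_n)
    _ = ε := ENNReal.add_halves ε

end Deterministic

section Empirical

variable {Ω : Type*} (X : ℕ → Ω → ℝ) (n : ℕ) (ω : Ω)

lemma monotone_empiricalCDF : Monotone (empiricalCDF X n ω) := fun x y hxy => by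
  unfold empiricalCDF
  gcongr with i

lemma empiricalCDF_le_one (x : ℝ) : empiricalCDF X n ω x ≤ 1 := by
  unfold empiricalCDF
  rcases n.eq_zero_or_pos with rfl | hn
  · simp
  rw [inv_mul_le_iff₀ (Nat.cast_pos.2 hn), mul_one, Nat.cast_le]
  exact (Finset.card_filter_le _ _).trans (Finset.card_range n).le

lemma empiricalCDF_eq_sum_indicator (x : ℝ) :
    empiricalCDF X n ω x = (∑ i ∈ Finset.range n, (Iic x).indicator (1 : ℝ → ℝ) (X i ω)) / n := by
  rw [empiricalCDF, Finset.natCast_card_filter, inv_mul_eq_div]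
  simp only [indicator_apply, mem_Iic, Pi.one_apply]

end Empirical

open ProbabilityTheory in
lemma ae_tendsto_empiricalCDF {Ω : Type*} [MeasurableSpace Ω] {P : Measure Ω}
    [IsProbabilityMeasure P] {X : ℕ → Ω → ℝ} (hmeas : ∀ i, Measurable (X i))
    (hindep : iIndepFun X P) (hident : ∀ i, IdentDistrib (X i) (X 0) P P) (x : ℝ) :
    ∀ᵐ ω ∂P, Tendsto (fun n => empiricalCDF X n ω x) atTop (𝓝 (P.real (X 0 ⁻¹' Iic x))) := by
  have hind : Measurable ((Iic x).indicator (1 : ℝ → ℝ)) :=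
    measurable_one.indicator measurableSet_Iic
  have hint : Integrable ((Iic x).indicator (1 : ℝ → ℝ) ∘ X 0) P :=
    .of_bound (hind.comp (hmeas 0)).aestronglyMeasurable 1 (ae_of_all _ fun ω =>
      (norm_indicator_le_norm_self _ _).trans_eq norm_one)
  have hmean : ∫ ω, (Iic x).indicator (1 : ℝ → ℝ) (X 0 ω) ∂P = P.real (X 0 ⁻¹' Iic x) := by
    simp_rw [← indicator_comp_right, Pi.one_comp]
    exact integral_indicator_one (measurableSet_Iic.preimage (hmeas 0))
  have := strong_law_ae_real (fun i => (Iic x).indicator (1 : ℝ → ℝ) ∘ X i) hint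
    (fun i j hij => (hindep.indepFun hij).comp hind hind) (fun i => (hident i).comp hind)
  simpa only [hmean, Function.comp_apply, ← empiricalCDF_eq_sum_indicator] using this

lemma withDensity_real_Iic {f : ℝ → ℝ} (hnn : ∀ x ∈ Ioc (0:ℝ) 1, 0 ≤ f x)
    (hint : IntegrableOn f (Ioc 0 1)) {x : ℝ} (hx : x ∈ Icc (0:ℝ) 1) :
    ((volume.restrict (Ioc 0 1)).withDensity fun y => ENNReal.ofReal (f y)).real (Iic x)
      = cdfOfDensity f x := by
  rw [measureReal_def, withDensity_apply _ measurableSet_Iic,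
    Measure.restrict_restrict measurableSet_Iic, Iic_inter_Ioc_of_le hx.2,
    lintegral_Ioc_ofReal_eq_cdfOfDensity hnn hint hx,
    ENNReal.toReal_ofReal (cdfOfDensity_nonneg hnn hint hx)]

lemma exists_nat_div_bracket {M : ℕ} (hM : 0 < M) {x : ℝ} (hx : x ∈ Icc (0:ℝ) 1) :
    ∃ j k : ℕ, j ≤ M ∧ k ≤ M ∧ (j / M : ℝ) ≤ x ∧ x ≤ k / M ∧ (k / M : ℝ) - j / M ≤ 1 / M := by
  have hM' : (0:ℝ) < M := Nat.cast_pos.2 hM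
  have hxM : 0 ≤ x * M := mul_nonneg hx.1 hM'.le
  have hkM : ⌈x * M⌉₊ ≤ M := Nat.ceil_le.2 (by nlinarith [hx.2])
  refine ⟨⌊x * M⌋₊, ⌈x * M⌉₊, (Nat.floor_le_ceil _).trans hkM, hkM, ?_, ?_, ?_⟩
  · rw [div_le_iff₀ hM']; exact Nat.floor_le hxM
  · rw [le_div_iff₀ hM']; exact Nat.le_ceil _
  · rw [← sub_div, div_le_div_iff_of_pos_right hM', sub_le_iff_le_add']
    exact_mod_cast Nat.ceil_le_floor_add_one _

lemma tendstoUniformlyOn_Icc_of_monotoneOn {ι : Type*} {l : Filter ι} {h : ι → ℝ → ℝ}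
    {F : ℝ → ℝ} (hh : ∀ n, MonotoneOn (h n) (Icc 0 1)) (hF : ContinuousOn F (Icc 0 1))
    (hconv : ∀ q : ℚ, (q : ℝ) ∈ Icc (0:ℝ) 1 → Tendsto (fun n => h n q) l (𝓝 (F q))) :
    TendstoUniformlyOn h F l (Icc 0 1) := by
  rw [Metric.tendstoUniformlyOn_iff]
  intro ε hε
  obtain ⟨δ, hδ, hFδ⟩ := Metric.uniformContinuousOn_iff.1
    (isCompact_Icc.uniformContinuousOn_of_continuous hF) (ε / 2) (half_pos hε)
  obtain ⟨N, hN⟩ := exists_nat_one_div_lt hδ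
  set M : ℕ := N + 1
  have hM : (0:ℝ) < M := by positivity
  have hMδ : 1 / (M : ℝ) < δ := by simpa [M] using hN
  have hgrid_mem : ∀ j ≤ M, (j / M : ℝ) ∈ Icc (0:ℝ) 1 := fun j hj =>
    ⟨by positivity, div_le_one_of_le₀ (by exact_mod_cast hj) hM.le⟩
  have hgrid : ∀ᶠ n in l, ∀ j ∈ Finset.range (M + 1),
      dist (h n (j / M)) (F (j / M)) < ε / 2 := by
    refine (eventually_all_finset _).2 fun j hj => ?_
    have hj : j ≤ M := Nat.lt_succ_iff.1 (Finset.mem_range.1 hj)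
    have := hconv (j / M) (by push_cast; exact hgrid_mem j hj)
    push_cast at this
    exact this.eventually (Metric.ball_mem_nhds _ (half_pos hε))
  filter_upwards [hgrid] with n hn x hx
  obtain ⟨j, k, hjM, hkM, hjx, hxk, hjk⟩ := exists_nat_div_bracket (Nat.succ_pos N) hx
  have hjδ : dist (j / M : ℝ) x < δ := by
    rw [Real.dist_eq, abs_of_nonpos (by linarith)]; linarith
  have hkδ : dist (k / M : ℝ) x < δ := by
    rw [Real.dist_eq, abs_of_nonneg (by linarith)]; linarith
  have hFj := hFδ _ (hgrid_mem j hjM) x hx hjδ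
  have hFk := hFδ _ (hgrid_mem k hkM) x hx hkδ
  have hhj := hn j (Finset.mem_range.2 (Nat.lt_succ_of_le hjM))
  have hhk := hn k (Finset.mem_range.2 (Nat.lt_succ_of_le hkM))
  have hmono_j := hh n (hgrid_mem j hjM) hx hjx
  have hmono_k := hh n hx (hgrid_mem k hkM) hxk
  rw [Real.dist_eq, abs_sub_lt_iff] at hFj hFk hhj hhk ⊢
  constructor <;> linarith

open ProbabilityTheory in
theorem ae_tendstoUniformlyOn_empiricalCDF {Ω : Type*} [MeasurableSpace Ω] {P : Measure Ω}
    [IsProbabilityMeasure P] {X : ℕ → Ω → ℝ} (hmeas : ∀ i, Measurable (X i))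
    (hindep : iIndepFun X P) {f : ℝ → ℝ} (hnn : ∀ x ∈ Ioc (0:ℝ) 1, 0 ≤ f x)
    (hint : IntegrableOn f (Ioc 0 1))
    (hlaw : ∀ i, Measure.map (X i) P
      = (volume.restrict (Ioc 0 1)).withDensity fun x => ENNReal.ofReal (f x)) :
    ∀ᵐ ω ∂P, TendstoUniformlyOn (fun n => empiricalCDF X n ω) (cdfOfDensity f) atTop (Icc 0 1) := by
  have hident : ∀ i, IdentDistrib (X i) (X 0) P P := fun i =>
    ⟨(hmeas i).aemeasurable, (hmeas 0).aemeasurable, (hlaw i).trans (hlaw 0).symm⟩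
  have hrat : ∀ q : ℚ, ∀ᵐ ω ∂P, (q : ℝ) ∈ Icc (0:ℝ) 1 →
      Tendsto (fun n => empiricalCDF X n ω q) atTop (𝓝 (cdfOfDensity f q)) := fun q => by
    filter_upwards [ae_tendsto_empiricalCDF hmeas hindep hident q] with ω hω hq
    rwa [← map_measureReal_apply (hmeas 0) measurableSet_Iic, hlaw 0,
      withDensity_real_Iic hnn hint hq] at hω
  filter_upwards [ae_all_iff.2 hrat] with ω hω
  exact tendstoUniformlyOn_Icc_of_monotoneOn
    (fun n => (monotone_empiricalCDF X n ω).monotoneOn _) (continuousOn_cdfOfDensity hint) hω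

theorem grenander_consistency_general
    {Ω : Type*} [MeasurableSpace Ω] (P : Measure Ω) [IsProbabilityMeasure P]
    (X : ℕ → Ω → ℝ)
    (hmeas : ∀ i, Measurable (X i))
    (hindep : ProbabilityTheory.iIndepFun X P)
    (f : ℝ → ℝ)
    (hnn : ∀ x ∈ Ioc (0:ℝ) 1, 0 ≤ f x)
    (hanti : AntitoneOn f (Ioc 0 1))
    (hint : IntegrableOn f (Ioc 0 1))
    (hlaw : ∀ i, Measure.map (X i) P
      = (volume.restrict (Ioc 0 1)).withDensity fun x => ENNReal.ofReal (f x)) :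
    ∀ᵐ ω ∂P,
      Tendsto
        (fun n => ∫⁻ x in Ioc (0:ℝ) 1,
          ENNReal.ofReal ((grenanderEstimator X n ω x - f x) ^ 2 * x))
        atTop (nhds 0) := by
  filter_upwards [ae_tendstoUniformlyOn_empiricalCDF hmeas hindep hnn hint hlaw] with ω hω
  have hmaj : ∀ n, ∃ c, IsConcaveMajorant (empiricalCDF X n ω) c := fun n =>
    ⟨fun _ => 1, concaveOn_const 1 (convex_Icc 0 1), fun z _ => empiricalCDF_le_one X n ω z⟩
  exact tendsto_lintegral_sq_leftDeriv_sub hnn hanti hint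
    (fun n => concaveOn_leastConcaveMajorant (hmaj n))
    (fun n => monotoneOn_leastConcaveMajorant ((monotone_empiricalCDF X n ω).monotoneOn _) (hmaj n))
    (hω.leastConcaveMajorant (concaveOn_cdfOfDensity hanti hint))

/-- **Consistency (equation (2.21)).** For an infinite i.i.d. sequence with values in `[0,1]`
and right-continuous nonincreasing density `f`, the Grenander estimator is consistent in the
weighted integrated square distance: a.s. `∫₀¹ (f̂ₙ(x−) − f(x))²·x dx → 0` as `n → ∞`. -/
theorem grenander_consistency
    {Ω : Type*} [MeasurableSpace Ω] (P : Measure Ω) [IsProbabilityMeasure P]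
    (X : ℕ → Ω → ℝ)
    (hmeas : ∀ i, Measurable (X i))
    (hrange : ∀ i ω, X i ω ∈ Icc (0:ℝ) 1)
    (hindep : ProbabilityTheory.iIndepFun X P)
    (f : ℝ → ℝ)
    (hnn : ∀ x ∈ Ioc (0:ℝ) 1, 0 ≤ f x)
    (hanti : AntitoneOn f (Ioc 0 1))
    (hrc : ∀ x ∈ Ioo (0:ℝ) 1, ContinuousWithinAt f (Ici x) x)
    (hint : IntegrableOn f (Ioc 0 1))
    (htot : ∫ x in Ioc (0:ℝ) 1, f x = 1)
    (hlaw : ∀ i, Measure.map (X i) P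
      = (volume.restrict (Ioc 0 1)).withDensity fun x => ENNReal.ofReal (f x)) :
    ∀ᵐ ω ∂P,
      Tendsto
        (fun n => ∫⁻ x in Ioc (0:ℝ) 1,
          ENNReal.ofReal ((grenanderEstimator X n ω x - f x) ^ 2 * x))
        atTop (nhds 0) :=
  grenander_consistency_general P X hmeas hindep f hnn hanti hint hlaw
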